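/- arXiv:2307.09849 — 2 statements merged into one kernel-verified Lean document; each statement's English description precedes it below -/
import Mathlib

section
/- Let A be a complex Banach *-algebra with identity, and let a, b ∈ A be *-DMP elements. If ab = ba and a* b = b a*, then ab is *-DMP. -/
/-- Moore–Penrose inverse. -/
def IsMP {A : Type*} [Ring A] [StarRing A] (a x : A) : Prop :=
  a * x * a = a ∧ x * a * x = x ∧ star (a * x) = a * x ∧ star (x * a) = x * a

/-- Group inverse. -/
def IsGroupInv {A : Type*} [Ring A] (a x : A) : Prop :=
  a * x * a = a ∧ x * a * x = x ∧ a * x = x * a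

/-- `a` is *-DMP: some power `a ^ n` (`n ≥ 1`) has a common Moore–Penrose and group inverse. -/
def IsStarDMP {A : Type*} [Ring A] [StarRing A] (a : A) : Prop :=
  ∃ n : ℕ, 1 ≤ n ∧ ∃ x : A, IsMP (a ^ n) x ∧ IsGroupInv (a ^ n) x

/-- `x` is the Drazin inverse of `a` (with some index `k`). -/
def IsDrazin {A : Type*} [Ring A] (a x : A) : Prop :=
  ∃ k : ℕ, x * a ^ (k + 1) = a ^ k ∧ a * x ^ 2 = x ∧ a * x = x * a

/-- `x` is the pseudo core inverse of `a`. -/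
def IsPCore {A : Type*} [Ring A] [StarRing A] (a x : A) : Prop :=
  ∃ k : ℕ, x * a ^ (k + 1) = a ^ k ∧ a * x ^ 2 = x ∧ star (a * x) = a * x

/-- EP element: common group and Moore–Penrose inverse. -/
def IsEP {A : Type*} [Ring A] [StarRing A] (a : A) : Prop :=
  ∃ x : A, IsMP a x ∧ IsGroupInv a x

/-!
Whatever commutes with an element also commutes with its group inverse. Hence if `c`, `d` are
commuting EP elements with inverses `x`, `y`, the four elements `c, d, x, y` commute pairwise, and
`x * y` is then both the Moore–Penrose and the group inverse of `c * d`. Powers of EP elements are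
EP, so if `a ^ n` and `b ^ m` are EP, then so are the commuting elements `a ^ (n * m)` and
`b ^ (n * m)`, whose product is `(a * b) ^ (n * m)`.
-/

section Ring

variable {R : Type*} [Ring R] {c d x y : R}

lemma Commute.pow_mul_pow_mul_pow (h : Commute c x) (k : ℕ) :
    c ^ k * x ^ k * c ^ k = (c * x * c) ^ k := by
  rw [← h.mul_pow, ← ((Commute.refl c).mul_left h.symm).mul_pow]

lemma mul_mul_mul_mul_eq_of_commute (hcd : Commute c d) (hcy : Commute c y) (hxd : Commute x d) :
    c * d * (x * y) * (c * d) = c * x * c * (d * y * d) := by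
  rw [hxd.symm.mul_mul_mul_comm, (hcd.symm.mul_left hcy.symm).mul_mul_mul_comm]

namespace IsGroupInv

lemma commute (h : IsGroupInv c x) : Commute c x := h.2.2

lemma commute_of_commute {u : R} (h : IsGroupInv c x) (hu : Commute u c) : Commute u x := by
  obtain ⟨h1, h2, h3⟩ := h
  have hcxx : c * (x * x) = x := by rw [← mul_assoc, h3, h2]
  have hxxc : x * x * c = x := by rw [mul_assoc, ← h3, ← mul_assoc, h2]
  -- `u * x` and `x * u` are absorbed by the idempotent `c * x` on the left and right respectively.
  have hleft : u * x = c * x * (u * x) := calc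
    u * x = u * c * (x * x) := by rw [mul_assoc, hcxx]
    _ = c * x * c * u * (x * x) := by rw [hu.eq, h1]
    _ = c * x * (c * u * (x * x)) := by noncomm_ring
    _ = c * x * (u * c * (x * x)) := by rw [hu.eq]
    _ = c * x * (u * x) := by rw [mul_assoc u, hcxx]
  have hright : x * u = x * u * (c * x) := calc
    x * u = x * x * (c * u) := by rw [← mul_assoc, hxxc]
    _ = x * x * (u * (c * x * c)) := by rw [← hu.eq, h1]
    _ = x * x * (u * c) * (x * c) := by noncomm_ring
    _ = x * x * c * u * (x * c) := by rw [hu.eq]; noncomm_ring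
    _ = x * u * (c * x) := by rw [hxxc, h3]
  calc u * x = c * x * (u * x) := hleft
    _ = x * (c * u) * x := by rw [h3]; noncomm_ring
    _ = x * u * (c * x) := by rw [← hu.eq]; noncomm_ring
    _ = x * u := hright.symm

lemma pow (h : IsGroupInv c x) (k : ℕ) : IsGroupInv (c ^ k) (x ^ k) := by
  obtain ⟨h1, h2, hcx⟩ := h
  exact ⟨by rw [Commute.pow_mul_pow_mul_pow hcx, h1],
    by rw [Commute.pow_mul_pow_mul_pow hcx.symm, h2], (Commute.pow_pow hcx k k).eq⟩

lemma mul (hc : IsGroupInv c x) (hd : IsGroupInv d y) (hcd : Commute c d) (hcy : Commute c y)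
    (hxd : Commute x d) (hxy : Commute x y) : IsGroupInv (c * d) (x * y) :=
  ⟨by rw [mul_mul_mul_mul_eq_of_commute hcd hcy hxd, hc.1, hd.1],
    by rw [mul_mul_mul_mul_eq_of_commute hxy hxd hcy, hc.2.1, hd.2.1],
    ((hc.commute.mul_right hcy).mul_left (hxd.symm.mul_right hd.commute)).eq⟩

end IsGroupInv

variable [StarRing R]

namespace IsMP

lemma pow (h : IsMP c x) (hcx : Commute c x) (k : ℕ) : IsMP (c ^ k) (x ^ k) := by
  obtain ⟨h1, h2, h3, h4⟩ := h
  refine ⟨by rw [hcx.pow_mul_pow_mul_pow, h1], by rw [hcx.symm.pow_mul_pow_mul_pow, h2], ?_, ?_⟩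
  · rw [← hcx.mul_pow, star_pow, h3]
  · rw [← hcx.symm.mul_pow, star_pow, h4]

lemma mul (hc : IsMP c x) (hd : IsMP d y) (hcd : Commute c d) (hcy : Commute c y)
    (hxd : Commute x d) (hxy : Commute x y) : IsMP (c * d) (x * y) := by
  obtain ⟨c1, c2, c3, c4⟩ := hc
  obtain ⟨d1, d2, d3, d4⟩ := hd
  refine ⟨by rw [mul_mul_mul_mul_eq_of_commute hcd hcy hxd, c1, d1],
    by rw [mul_mul_mul_mul_eq_of_commute hxy hxd hcy, c2, d2], ?_, ?_⟩
  · have hcomm : Commute (c * x) (d * y) :=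
      (hcd.mul_right hcy).mul_left (hxd.mul_right hxy)
    rw [hxd.symm.mul_mul_mul_comm, star_mul, c3, d3, hcomm.eq]
  · have hcomm : Commute (x * c) (y * d) :=
      (hxy.mul_right hxd).mul_left (hcy.mul_right hcd)
    rw [hcy.symm.mul_mul_mul_comm, star_mul, c4, d4, hcomm.eq]

end IsMP

namespace IsEP

lemma pow (h : IsEP c) (k : ℕ) : IsEP (c ^ k) :=
  let ⟨x, hmp, hg⟩ := h
  ⟨x ^ k, hmp.pow hg.commute k, hg.pow k⟩

lemma mul (hc : IsEP c) (hd : IsEP d) (hcd : Commute c d) : IsEP (c * d) := by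
  obtain ⟨x, hcmp, hcg⟩ := hc
  obtain ⟨y, hdmp, hdg⟩ := hd
  have hcy : Commute c y := hdg.commute_of_commute hcd
  have hxd : Commute x d := (hcg.commute_of_commute hcd.symm).symm
  have hxy : Commute x y := hdg.commute_of_commute hxd
  exact ⟨x * y, hcmp.mul hdmp hcd hcy hxd hxy, hcg.mul hdg hcd hcy hxd hxy⟩

end IsEP

end Ring

variable {A : Type*} [NormedRing A] [StarRing A] [NormedAlgebra ℂ A] [CompleteSpace A]

theorem stmt4_general (a b : A) (ha : IsStarDMP a) (hb : IsStarDMP b)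
    (hab : a * b = b * a) :
    IsStarDMP (a * b) := by
  obtain ⟨n, hn, ha⟩ := ha
  obtain ⟨m, hm, hb⟩ := hb
  have hab : Commute a b := hab
  have ha' : IsEP (a ^ (n * m)) := by rw [pow_mul]; exact IsEP.pow ha m
  have hb' : IsEP (b ^ (n * m)) := by rw [mul_comm, pow_mul]; exact IsEP.pow hb n
  refine ⟨n * m, Nat.mul_pos hn hm, ?_⟩
  rw [hab.mul_pow]
  exact ha'.mul hb' (hab.pow_pow _ _)

theorem stmt4 (a b : A) (ha : IsStarDMP a) (hb : IsStarDMP b)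
    (hab : a * b = b * a) (hsb : star a * b = b * star a) :
    IsStarDMP (a * b) :=
  stmt4_general a b ha hb hab
end

section
/- Let M = [[A, B], [C, D]] ∈ ℂ^{2n×2n} where A, D, BC, CB ∈ ℂ^{n×n} are *-DMP. If AB = BD, DC = CA, A*B = BD*, D*C = CA*, and A^D B D^D C is nilpotent, then M is *-DMP. -/
/-
Write `M = Q + P` with `Q = diag(A, D)` and `P` the off-diagonal part. Then `Q` and `P` commute,
`Q` has Drazin inverse `diag(A^D, D^D)`, and `Q` and `P` are *-DMP (`P² = diag(BC, CB)`).

An element `a` is *-DMP exactly when it has a self-adjoint core idempotent `p` (for instance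
`p = a a^D`): an idempotent commuting with `a` such that `a` is invertible on `p` and nilpotent
on `1 - p`. If `e`, `g` are those of `Q`, `P`, then `e + g - e g` is one for `Q + P`: on `e`, `Q` is
invertible and `P e = Q (Q^D P)` is nilpotent; on `g (1 - e)`, `P` is invertible and `Q` is
nilpotent; on `(1 - e)(1 - g)` both are nilpotent.
-/

theorem isNilpotent_mul_comm {M : Type*} [MonoidWithZero M] {a b : M} :
    IsNilpotent (a * b) ↔ IsNilpotent (b * a) := by
  suffices ∀ a b : M, IsNilpotent (a * b) → IsNilpotent (b * a) from ⟨this a b, this b a⟩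
  rintro a b ⟨n, hn⟩
  exact ⟨n + 1, by rw [pow_succ', mul_assoc, ← mul_pow_mul, hn, zero_mul, mul_zero]⟩

section Corner

variable {R : Type*} [Ring R] {p q a b c : R}

theorem Commute.corner (ha : Commute a c) (hp : Commute p c) :
    Commute (a * p + (1 - p)) c :=
  (ha.mul_left hp).add_left ((Commute.one_left c).sub_left hp)

theorem IsIdempotentElem.corner_mul (hp : IsIdempotentElem p) (hb : Commute b p) :
    (a * p + (1 - p)) * (b * p + (1 - p)) = a * b * p + (1 - p) := by
  have hp_mul : p * (b * p + (1 - p)) = b * p := by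
    rw [mul_add, ← mul_assoc, ← hb.eq, mul_assoc, hp.eq, hp.mul_one_sub_self, add_zero]
  have hq_mul : (1 - p) * (b * p + (1 - p)) = 1 - p := by
    rw [mul_add, ← mul_assoc, ← ((Commute.one_right b).sub_right hb).eq, mul_assoc,
      hp.one_sub_mul_self, mul_zero, zero_add, hp.one_sub.eq]
  rw [add_mul, mul_assoc, hp_mul, hq_mul, mul_assoc]

theorem IsIdempotentElem.corner_pow (hp : IsIdempotentElem p) (ha : Commute a p) (n : ℕ) :
    (a * p + (1 - p)) ^ n = a ^ n * p + (1 - p) := by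
  induction n with
  | zero => simp
  | succ n ih => rw [pow_succ, ih, hp.corner_mul ha, pow_succ]

theorem IsIdempotentElem.isUnit_corner (hp : IsIdempotentElem p) (ha : IsUnit a)
    (hap : Commute a p) : IsUnit (a * p + (1 - p)) := by
  obtain ⟨u, rfl⟩ := ha
  have hu' : Commute ↑u⁻¹ p := hap.units_inv_left
  refine ⟨⟨_, ↑u⁻¹ * p + (1 - p), ?_, ?_⟩, rfl⟩
  · rw [hp.corner_mul hu', u.mul_inv, one_mul, add_sub_cancel]
  · rw [hp.corner_mul hap, u.inv_mul, one_mul, add_sub_cancel]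

theorem corner_mul_corner_of_mul_eq_zero (hpq : p * q = 0) (hap : Commute a p) :
    (a * p + (1 - p)) * (a * q + (1 - q)) = a * (p + q) + (1 - (p + q)) := by
  calc (a * p + (1 - p)) * (a * q + (1 - q))
      = a * (p * a) * q - (p * a) * q + a * p + a * q - a * (p * q) + 1 - p - q + p * q := by
        noncomm_ring
    _ = a * (p + q) + (1 - (p + q)) := by
        rw [← hap.eq]
        simp only [mul_assoc, hpq, mul_zero]
        noncomm_ring

theorem IsIdempotentElem.isUnit_corner_mul (hq : IsIdempotentElem q)
    (hu : IsUnit (a * p + (1 - p))) (haq : Commute a q) (hpq : Commute p q) :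
    IsUnit (a * (q * p) + (1 - q * p)) := by
  have key : (a * p + (1 - p)) * q + (1 - q) = a * (q * p) + (1 - q * p) := by
    rw [← hpq.eq]; noncomm_ring
  rw [← key]
  exact hq.isUnit_corner hu (haq.corner hpq)

theorem isUnit_corner_add_of_isNilpotent (hap : Commute a p) (hbp : Commute b p)
    (hab : Commute a b) (hu : IsUnit (a * p + (1 - p))) (hn : IsNilpotent (b * p)) :
    IsUnit ((a + b) * p + (1 - p)) := by
  rw [add_mul, add_right_comm]
  refine hn.isUnit_add_left_of_commute hu ?_
  exact ((hab.mul_right hap).corner (hbp.symm.mul_right (Commute.refl p))).symm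

end Corner

section CoreIdempotent

variable {R : Type*} [Ring R]

-- `p` plays the role of `a a^D`: `a` is invertible in the corner `p R p`, encoded as
-- `a p + (1 - p)` being a unit of `R`, and nilpotent in the corner `(1 - p) R (1 - p)`.
structure IsCoreIdempotent (a p : R) : Prop where
  isIdempotentElem : IsIdempotentElem p
  commute : Commute a p
  isUnit : IsUnit (a * p + (1 - p))
  isNilpotent : IsNilpotent (a * (1 - p))

namespace IsCoreIdempotent

variable {a p q c : R}

theorem exists_pow_mul_one_sub_eq_zero (h : IsCoreIdempotent a p) :
    ∃ N, a ^ N * (1 - p) = 0 := by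
  obtain ⟨N, hN⟩ := h.isNilpotent
  refine ⟨N + 1, ?_⟩
  rw [← h.isIdempotentElem.one_sub.pow_succ_eq N,
    ← ((Commute.one_right a).sub_right h.commute).mul_pow, pow_succ, hN, zero_mul]

theorem pow_mul_eq (h : IsCoreIdempotent a p) (N : ℕ) :
    (a * p + (1 - p)) ^ N * p = a ^ N * p := by
  rw [h.isIdempotentElem.corner_pow h.commute, add_mul, h.isIdempotentElem.one_sub_mul_self,
    add_zero, mul_assoc, h.isIdempotentElem.eq]

theorem exists_eq_mul_pow (h : IsCoreIdempotent a p) (N : ℕ) :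
    ∃ w, Commute w a ∧ p = w * a ^ N := by
  obtain ⟨u, hu⟩ := h.isUnit
  have hua : Commute ↑(u ^ N) a := by
    rw [Units.val_pow_eq_pow_val, hu]
    exact ((Commute.refl a).corner h.commute.symm).pow_left N
  refine ⟨↑(u ^ N)⁻¹ * p, hua.units_inv_left.mul_left h.commute.symm, ?_⟩
  calc p = ↑(u ^ N)⁻¹ * (↑(u ^ N) * p) := by rw [← mul_assoc, Units.inv_mul, one_mul]
    _ = ↑(u ^ N)⁻¹ * (a ^ N * p) := by rw [Units.val_pow_eq_pow_val, hu, h.pow_mul_eq]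
    _ = ↑(u ^ N)⁻¹ * p * a ^ N := by rw [(h.commute.pow_left N).eq, mul_assoc]

theorem mul_eq_left (hp : IsCoreIdempotent a p) (hq : IsCoreIdempotent a q) : p * q = p := by
  obtain ⟨N, hN⟩ := hq.exists_pow_mul_one_sub_eq_zero
  obtain ⟨w, -, hw⟩ := hp.exists_eq_mul_pow N
  have h : p * (1 - q) = 0 := by rw [hw, mul_assoc, hN, mul_zero]
  rwa [mul_sub, mul_one, sub_eq_zero, eq_comm] at h

theorem mul_eq_right (hp : IsCoreIdempotent a p) (hq : IsCoreIdempotent a q) : q * p = p := by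
  obtain ⟨N, hN⟩ := hq.exists_pow_mul_one_sub_eq_zero
  obtain ⟨w, hwa, hw⟩ := hp.exists_eq_mul_pow N
  have hqa : Commute (1 - q) (a ^ N) :=
    (Commute.one_left _).sub_left (hq.commute.pow_left N).symm
  have h : (1 - q) * p = 0 := by
    rw [hw, (hwa.pow_right N).eq, ← mul_assoc, hqa.eq, hN, zero_mul]
  rwa [sub_mul, one_mul, sub_eq_zero, eq_comm] at h

theorem unique (hp : IsCoreIdempotent a p) (hq : IsCoreIdempotent a q) : p = q :=
  (hp.mul_eq_right hq).symm.trans (hq.mul_eq_left hp)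

theorem commute_of_commute (h : IsCoreIdempotent a p) (hc : Commute c a) : Commute c p := by
  obtain ⟨N, hN⟩ := h.exists_pow_mul_one_sub_eq_zero
  obtain ⟨w, hwa, hw⟩ := h.exists_eq_mul_pow N
  have hcN : Commute c (a ^ N) := hc.pow_right N
  have h₁ : p * c * (1 - p) = 0 := by
    calc p * c * (1 - p) = w * (a ^ N * c) * (1 - p) := by rw [hw, mul_assoc w]
      _ = 0 := by rw [← hcN.eq, mul_assoc, mul_assoc, hN, mul_zero, mul_zero]
  have h₂ : (1 - p) * c * p = 0 := by
    have hpN : Commute (1 - p) (a ^ N) :=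
      (Commute.one_left _).sub_left (h.commute.pow_left N).symm
    calc (1 - p) * c * p = (1 - p) * (c * a ^ N) * w := by
          rw [hw, (hwa.pow_right N).eq, mul_assoc, mul_assoc, mul_assoc]
      _ = 0 := by rw [hcN.eq, ← mul_assoc, hpN.eq, hN, zero_mul, zero_mul]
  rw [mul_sub, mul_one, sub_eq_zero] at h₁
  rw [sub_mul, sub_mul, one_mul, sub_eq_zero] at h₂
  exact h₂.trans h₁.symm

theorem of_pow {m : ℕ} (h : IsCoreIdempotent (a ^ m) p) (hm : m ≠ 0) :
    IsCoreIdempotent a p := by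
  have hap : Commute a p := h.commute_of_commute (Commute.self_pow a m)
  refine ⟨h.isIdempotentElem, hap, ?_, ?_⟩
  · rw [← isUnit_pow_iff hm, h.isIdempotentElem.corner_pow hap]
    exact h.isUnit
  · refine IsNilpotent.of_pow (m := m) ?_
    rw [((Commute.one_right a).sub_right hap).mul_pow, h.isIdempotentElem.one_sub.pow_eq hm]
    exact h.isNilpotent

theorem map {S F : Type*} [Ring S] [FunLike F R S] [RingHomClass F R S]
    (h : IsCoreIdempotent a p) (f : F) : IsCoreIdempotent (f a) (f p) :=
  ⟨h.isIdempotentElem.map f, h.commute.map f, by simpa using h.isUnit.map f,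
    by simpa using h.isNilpotent.map f⟩

theorem add {x y e g : R} (hx : IsCoreIdempotent x e) (hy : IsCoreIdempotent y g)
    (hxy : Commute x y) (hxg : Commute x g) (hye : Commute y e) (heg : Commute e g)
    (hnil : IsNilpotent (y * e)) :
    IsCoreIdempotent (x + y) (e + g - e * g) := by
  have hxe := hx.commute
  have hyg := hy.commute
  have hxe' : Commute x (1 - e) := (Commute.one_right x).sub_right hxe
  have hxg' : Commute x (1 - g) := (Commute.one_right x).sub_right hxg
  have hye' : Commute y (1 - e) := (Commute.one_right y).sub_right hye
  have hyg' : Commute y (1 - g) := (Commute.one_right y).sub_right hyg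
  have heg' : Commute (1 - e) (1 - g) :=
    (Commute.one_left _).sub_left ((Commute.one_right e).sub_right heg)
  refine ⟨hx.isIdempotentElem.add_sub_mul_of_commute heg hy.isIdempotentElem,
    ((hxe.add_left hye).add_right (hxg.add_left hyg)).sub_right
      ((hxe.add_left hye).mul_right (hxg.add_left hyg)), ?_, ?_⟩
  · have hunit_e : IsUnit ((x + y) * e + (1 - e)) :=
      isUnit_corner_add_of_isNilpotent hxe hye hxy hx.isUnit hnil
    have hunit_f : IsUnit ((x + y) * ((1 - e) * g) + (1 - (1 - e) * g)) := by
      rw [add_comm x y]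
      refine isUnit_corner_add_of_isNilpotent (hye'.mul_right hyg) (hxe'.mul_right hxg) hxy.symm
        (hx.isIdempotentElem.one_sub.isUnit_corner_mul hy.isUnit hye' ?_) ?_
      · exact ((Commute.one_left _).sub_left heg).symm
      · rw [← mul_assoc]
        exact (hxg.mul_left ((Commute.one_left g).sub_left heg)).isNilpotent_mul_right
          hx.isNilpotent
    have horth : e * ((1 - e) * g) = 0 := by
      rw [← mul_assoc, hx.isIdempotentElem.mul_one_sub_self, zero_mul]
    have hsplit : e + g - e * g = e + (1 - e) * g := by noncomm_ring
    rw [hsplit, ← corner_mul_corner_of_mul_eq_zero horth (hxe.add_left hye)]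
    exact hunit_e.mul hunit_f
  · have hcompl : 1 - (e + g - e * g) = (1 - e) * (1 - g) := by noncomm_ring
    have hsplit :
        (x + y) * ((1 - e) * (1 - g)) = x * (1 - e) * (1 - g) + y * (1 - g) * (1 - e) := by
      rw [add_mul, ← mul_assoc, heg'.eq, ← mul_assoc]
    rw [hcompl, hsplit]
    refine Commute.isNilpotent_add ?_ ((hxg'.mul_left heg').isNilpotent_mul_right hx.isNilpotent)
      ((hye'.mul_left heg'.symm).isNilpotent_mul_right hy.isNilpotent)
    exact ((((hxy.mul_right hxg').mul_right hxe').mul_left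
      ((hye'.symm.mul_right heg').mul_right (Commute.refl _))).mul_left
      ((hyg'.symm.mul_right (Commute.refl _)).mul_right heg'.symm))

end IsCoreIdempotent

end CoreIdempotent

section Drazin

variable {R : Type*} [Ring R] {a x : R}

theorem IsDrazin.commute (h : IsDrazin a x) : Commute a x := h.choose_spec.2.2

theorem IsGroupInv.isDrazin (h : IsGroupInv a x) : IsDrazin a x := by
  obtain ⟨h₁, h₂, h₃⟩ := h
  refine ⟨1, ?_, ?_, h₃⟩
  · rw [pow_two, pow_one, ← mul_assoc, ← h₃, h₁]
  · rw [pow_two, ← mul_assoc, h₃, h₂]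

theorem IsDrazin.isCoreIdempotent (h : IsDrazin a x) : IsCoreIdempotent a (a * x) := by
  obtain ⟨k, hk, hx, hax⟩ := h
  have hidem : IsIdempotentElem (a * x) := by
    show a * x * (a * x) = a * x
    rw [mul_assoc, ← mul_assoc x, ← hax, mul_assoc, ← sq, hx]
  have hcomm : Commute a x := hax
  have hpow : a ^ (k + 1) * (a * x) = a ^ (k + 1) := by
    rw [(((Commute.refl a).mul_right hcomm).pow_left (k + 1)).eq, mul_assoc, hk, ← pow_succ']
  refine ⟨hidem, (Commute.refl a).mul_right hcomm,
    ⟨⟨_, x * (a * x) + (1 - a * x), ?_, ?_⟩, rfl⟩, ?_⟩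
  · rw [hidem.corner_mul (hcomm.symm.mul_right (Commute.refl x)), hidem.eq, add_sub_cancel]
  · rw [hidem.corner_mul ((Commute.refl a).mul_right hcomm), ← hax, hidem.eq, add_sub_cancel]
  · refine ⟨k + 1, ?_⟩
    rw [((Commute.one_right a).sub_right ((Commute.refl a).mul_right hcomm)).mul_pow,
      hidem.one_sub.pow_succ_eq, mul_sub, mul_one, hpow, sub_self]

end Drazin

section Star

variable {R : Type*} [Ring R] [StarRing R] {a p : R}

theorem isEP_mul_of_commute {u : R} (hu : IsUnit u) (hp : IsIdempotentElem p)
    (hp' : IsSelfAdjoint p) (hup : Commute u p) : IsEP (u * p) := by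
  obtain ⟨v, rfl⟩ := hu
  have hfix : ∀ w : R, Commute w p → p * (w * p) = w * p := fun w hw => by
    rw [← mul_assoc, ← hw.eq, mul_assoc, hp.eq]
  have hv : ↑v * p * (↑v⁻¹ * p) = p := by
    rw [mul_assoc, hfix _ hup.units_inv_left, ← mul_assoc, Units.mul_inv, one_mul]
  have hv' : ↑v⁻¹ * p * (↑v * p) = p := by
    rw [mul_assoc, hfix _ hup, ← mul_assoc, Units.inv_mul, one_mul]
  refine ⟨↑v⁻¹ * p, ⟨?_, ?_, ?_, ?_⟩, ?_, ?_, ?_⟩ <;>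
    simp only [hv, hv', hfix _ hup, hfix _ hup.units_inv_left, hp'.star_eq]

theorem IsCoreIdempotent.isStarDMP (h : IsCoreIdempotent a p) (hp : IsSelfAdjoint p) :
    IsStarDMP a := by
  obtain ⟨N, hN⟩ := h.exists_pow_mul_one_sub_eq_zero
  have hpow : a ^ (N + 1) = (a * p + (1 - p)) ^ (N + 1) * p := by
    have : a ^ (N + 1) * (1 - p) = 0 := by rw [pow_succ', mul_assoc, hN, mul_zero]
    rw [mul_sub, mul_one, sub_eq_zero] at this
    rw [h.pow_mul_eq, ← this]
  refine ⟨N + 1, Nat.le_add_left 1 N, ?_⟩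
  rw [hpow]
  exact isEP_mul_of_commute (h.isUnit.pow _) h.isIdempotentElem hp
    ((h.commute.corner (Commute.refl p)).pow_left _)

theorem IsStarDMP.exists_isCoreIdempotent (h : IsStarDMP a) :
    ∃ p, IsSelfAdjoint p ∧ IsCoreIdempotent a p := by
  obtain ⟨m, hm, x, hMP, hG⟩ := h
  exact ⟨_, hMP.2.2.1, hG.isDrazin.isCoreIdempotent.of_pow (by omega)⟩

theorem IsStarDMP.of_pow {m : ℕ} (h : IsStarDMP (a ^ m)) (hm : m ≠ 0) : IsStarDMP a := by
  obtain ⟨n, hn, hx⟩ := h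
  exact ⟨m * n, Nat.one_le_iff_ne_zero.mpr (by positivity), by rwa [pow_mul]⟩

theorem IsStarDMP.map {S F : Type*} [Ring S] [StarRing S] [FunLike F R S] [RingHomClass F R S]
    [StarHomClass F R S] (h : IsStarDMP a) (f : F) : IsStarDMP (f a) := by
  obtain ⟨p, hp, hap⟩ := h.exists_isCoreIdempotent
  exact (hap.map f).isStarDMP (hp.map f)

end Star

theorem IsDrazin.isStarDMP_add {R : Type*} [Ring R] [StarRing R] {q qd p : R}
    (hqd : IsDrazin q qd) (hq : IsStarDMP q) (hp : IsStarDMP p) (hqp : Commute q p)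
    (hnil : IsNilpotent (qd * p)) : IsStarDMP (q + p) := by
  obtain ⟨e, he, hqe⟩ := hq.exists_isCoreIdempotent
  obtain rfl : q * qd = e := hqd.isCoreIdempotent.unique hqe
  obtain ⟨g, hg, hpg⟩ := hp.exists_isCoreIdempotent
  have hpe : Commute p (q * qd) := hqe.commute_of_commute hqp.symm
  have heg : Commute (q * qd) g := hpg.commute_of_commute hpe.symm
  have hnil' : IsNilpotent (p * (q * qd)) := by
    rw [← mul_assoc, ← hqp.eq, mul_assoc]
    exact (hqp.mul_right hqd.commute).isNilpotent_mul_left (isNilpotent_mul_comm.mp hnil)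
  exact (hqe.add hpg hqp (hpg.commute_of_commute hqp) hpe heg hnil').isStarDMP
    ((he.add hg).sub ((IsSelfAdjoint.commute_iff he hg).mp heg))

section Prod

variable {R S : Type*} [Ring R] [Ring S] {a p x : R} {b q y : S}

theorem IsNilpotent.prodMk {M N : Type*} [MonoidWithZero M] [MonoidWithZero N] {x : M} {y : N}
    (hx : IsNilpotent x) (hy : IsNilpotent y) : IsNilpotent (x, y) := by
  obtain ⟨m, hm⟩ := hx
  obtain ⟨n, hn⟩ := hy
  exact ⟨max m n, Prod.ext (pow_eq_zero_of_le (le_max_left m n) hm)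
    (pow_eq_zero_of_le (le_max_right m n) hn)⟩

theorem IsCoreIdempotent.prodMk (ha : IsCoreIdempotent a p) (hb : IsCoreIdempotent b q) :
    IsCoreIdempotent (a, b) (p, q) :=
  ⟨Prod.ext ha.isIdempotentElem hb.isIdempotentElem, Prod.ext ha.commute hb.commute,
    Prod.isUnit_iff.mpr ⟨ha.isUnit, hb.isUnit⟩, ha.isNilpotent.prodMk hb.isNilpotent⟩

theorem IsStarDMP.prodMk [StarRing R] [StarRing S] (ha : IsStarDMP a) (hb : IsStarDMP b) :
    IsStarDMP (a, b) := by
  obtain ⟨p, hp, hap⟩ := ha.exists_isCoreIdempotent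
  obtain ⟨q, hq, hbq⟩ := hb.exists_isCoreIdempotent
  exact (hap.prodMk hbq).isStarDMP (Prod.ext hp hq)

theorem IsDrazin.prodMk (ha : IsDrazin a x) (hb : IsDrazin b y) : IsDrazin (a, b) (x, y) := by
  obtain ⟨k, hk, hx, hax⟩ := ha
  obtain ⟨l, hl, hy, hby⟩ := hb
  refine ⟨k + l, Prod.ext ?_ ?_, Prod.ext hx hy, Prod.ext hax hby⟩
  · show x * a ^ (k + l + 1) = a ^ (k + l)
    rw [add_right_comm, pow_add, ← mul_assoc, hk, pow_add]
  · show y * b ^ (k + l + 1) = b ^ (k + l)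
    rw [add_comm k, add_right_comm, pow_add, ← mul_assoc, hl, pow_add]

theorem IsDrazin.map {F : Type*} [FunLike F R S] [RingHomClass F R S] (h : IsDrazin a x)
    (f : F) : IsDrazin (f a) (f x) := by
  obtain ⟨k, hk, hx, hax⟩ := h
  exact ⟨k, by simp only [← map_pow, ← map_mul, hk],
    by simp only [← map_pow, ← map_mul, hx], by simp only [← map_mul, hax]⟩

end Prod

namespace Matrix

def fromBlocksDiagStarAlgHom (m n α : Type*) [Fintype m] [Fintype n] [DecidableEq m]
    [DecidableEq n] [CommSemiring α] [StarRing α] :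
    Matrix m m α × Matrix n n α →⋆ₐ[α] Matrix (m ⊕ n) (m ⊕ n) α where
  toFun x := fromBlocks x.1 0 0 x.2
  map_one' := fromBlocks_one
  map_mul' x y := by simp [fromBlocks_multiply]
  map_zero' := fromBlocks_zero
  map_add' x y := by simp [fromBlocks_add]
  commutes' r := by simp [algebraMap_eq_diagonal, fromBlocks_diagonal]
  map_star' x := by simp [star_eq_conjTranspose, fromBlocks_conjTranspose]

@[simp]
theorem fromBlocksDiagStarAlgHom_apply {m n α : Type*} [Fintype m] [Fintype n] [DecidableEq m]
    [DecidableEq n] [CommSemiring α] [StarRing α] (x : Matrix m m α × Matrix n n α) :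
    fromBlocksDiagStarAlgHom m n α x = fromBlocks x.1 0 0 x.2 := rfl

end Matrix

variable {A : Type*} [NormedRing A] [StarRing A] [NormedAlgebra ℂ A] [CompleteSpace A]

theorem stmt13_general {n : ℕ} (A B C D AD DD : Matrix (Fin n) (Fin n) ℂ)
    (hA : IsStarDMP A) (hD : IsStarDMP D)
    (hBC : IsStarDMP (B * C)) (hCB : IsStarDMP (C * B))
    (hAD : IsDrazin A AD) (hDD : IsDrazin D DD)
    (h1 : A * B = B * D) (h2 : D * C = C * A)
    (h5 : IsNilpotent (AD * B * (DD * C))) :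
    IsStarDMP (Matrix.fromBlocks A B C D) := by
  open Matrix in
  let φ := fromBlocksDiagStarAlgHom (Fin n) (Fin n) ℂ
  have hsplit : fromBlocks A B C D = φ (A, D) + fromBlocks 0 B C 0 := by
    simp [φ, fromBlocks_add]
  have hcomm : Commute (φ (A, D)) (fromBlocks 0 B C 0) := by
    simp [φ, Commute, SemiconjBy, fromBlocks_multiply, h1, h2]
  have hsq : fromBlocks 0 B C 0 ^ 2 = φ (B * C, C * B) := by
    simp [φ, sq, fromBlocks_multiply]
  have hnil : IsNilpotent (φ (AD, DD) * fromBlocks 0 B C 0) := by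
    have hsq' : (φ (AD, DD) * fromBlocks 0 B C 0) ^ 2
        = φ (AD * B * (DD * C), DD * C * (AD * B)) := by
      simp [φ, sq, fromBlocks_multiply, mul_assoc]
    exact IsNilpotent.of_pow (hsq' ▸ (h5.prodMk (isNilpotent_mul_comm.mp h5)).map φ)
  rw [hsplit]
  exact ((hAD.prodMk hDD).map φ).isStarDMP_add ((hA.prodMk hD).map φ)
    (IsStarDMP.of_pow (hsq ▸ (hBC.prodMk hCB).map φ) two_ne_zero) hcomm hnil

theorem stmt13 {n : ℕ} (A B C D AD DD : Matrix (Fin n) (Fin n) ℂ)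
    (hA : IsStarDMP A) (hD : IsStarDMP D)
    (hBC : IsStarDMP (B * C)) (hCB : IsStarDMP (C * B))
    (hAD : IsDrazin A AD) (hDD : IsDrazin D DD)
    (h1 : A * B = B * D) (h2 : D * C = C * A)
    (h3 : star A * B = B * star D) (h4 : star D * C = C * star A)
    (h5 : IsNilpotent (AD * B * (DD * C))) :
    IsStarDMP (Matrix.fromBlocks A B C D) :=
  stmt13_general A B C D AD DD hA hD hBC hCB hAD hDD h1 h2 h5
end
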